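/- arXiv:1606.03641 — 3 statements merged into one kernel-verified Lean document; each statement's English description precedes it below -/
import Mathlib

section
/- For all real α, β, let L₄(α,β) be the 4×4 matrix with rows (2+α, −1, −1, −α), (−1, 2+β, −1, −β), (−1, −1, 3, −1), (−α, −β, −1, 1+α+β). Then the characteristic polynomial of L₄(α,β) equals λ·(λ − 4)·(λ² − (4+2α+2β)λ + (3+5α+5β+3αβ)). -/
open Matrix Polynomial

/-- The parameter-dependent Laplacian `L₄(α,β)` from the paper. -/
noncomputable def L₄ (α β : ℝ) : Matrix (Fin 4) (Fin 4) ℝ :=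
  !![2 + α, -1, -1, -α;
     -1, 2 + β, -1, -β;
     -1, -1, 3, -1;
     -α, -β, -1, 1 + α + β]

lemma charmatrix_L₄ (α β : ℝ) :
    (L₄ α β).charmatrix =
      !![X - C (2 + α), 1, 1, C α;
         1, X - C (2 + β), 1, C β;
         1, 1, X - C 3, 1;
         C α, C β, 1, X - C (1 + α + β)] := by
  ext i j
  fin_cases i <;> fin_cases j <;> simp [L₄]

theorem stmt_8 (α β : ℝ) :
    (L₄ α β).charpoly =
      X * (X - C (4 : ℝ)) *
        (X ^ 2 - C (4 + 2 * α + 2 * β) * X + C (3 + 5 * α + 5 * β + 3 * α * β)) := by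
  rw [charpoly, charmatrix_L₄, det_succ_row_zero]
  simp [Fin.sum_univ_four, det_fin_three, Fin.succAbove, map_ofNat]
  ring
end

section
/- For all real α, β, setting D = 1 − α + α² − β − αβ + β² (which is nonnegative), the characteristic polynomial of L₄(α,β) factors over ℝ as λ·(λ − 4)·(λ − (2+α+β+√D))·(λ − (2+α+β−√D)); hence the eigenvalues of L₄(α,β), with multiplicity, are 0, 4, 2+α+β+√D, and 2+α+β−√D. -/
/-!
Expanding the determinant gives
`charpoly L₄(α,β) = X (X - 4) (X² - 2(2+α+β) X + 3 + 5α + 5β + 3αβ)`. The quadratic factor has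
discriminant `4D`, and `2D = (α - β)² + (1 - α)² + (1 - β)² ≥ 0`, so it splits over `ℝ` with
roots `2 + α + β ± √D`.
-/

open Matrix Polynomial Real

theorem Polynomial.X_sub_C_add_mul_X_sub_C_sub {R : Type*} [CommRing R] (m s : R) :
    (X - C (m + s)) * (X - C (m - s)) = X ^ 2 - C (2 * m) * X + C (m ^ 2 - s ^ 2) := by
  simp only [map_add, map_sub, map_mul, map_pow, map_ofNat]
  ring

theorem charpoly_L₄ (α β : ℝ) :
    (L₄ α β).charpoly =
      X * (X - C 4) * (X ^ 2 - C (2 * (2 + α + β)) * X + C (3 + 5 * α + 5 * β + 3 * α * β)) := by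
  rw [Matrix.charpoly, det_succ_row_zero]
  simp [Fin.sum_univ_succ, det_fin_three, charmatrix_apply, L₄, Fin.succAbove, submatrix,
    map_ofNat C]
  ring

theorem L₄_discr_nonneg (α β : ℝ) : 0 ≤ 1 - α + α ^ 2 - β - α * β + β ^ 2 := by
  nlinarith [sq_nonneg (α - β), sq_nonneg (1 - α), sq_nonneg (1 - β)]

theorem stmt_11 (α β : ℝ) (D : ℝ) (hD : D = 1 - α + α ^ 2 - β - α * β + β ^ 2) :
    0 ≤ D ∧
    (L₄ α β).charpoly =
      X * (X - C (4 : ℝ)) * (X - C (2 + α + β + Real.sqrt D)) *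
        (X - C (2 + α + β - Real.sqrt D)) ∧
    (L₄ α β).charpoly.roots =
      ({0, 4, 2 + α + β + Real.sqrt D, 2 + α + β - Real.sqrt D} : Multiset ℝ) := by
  have hD₀ : 0 ≤ D := hD ▸ L₄_discr_nonneg α β
  have hfactor : (L₄ α β).charpoly =
      X * (X - C (4 : ℝ)) * (X - C (2 + α + β + Real.sqrt D)) *
        (X - C (2 + α + β - Real.sqrt D)) := by
    rw [charpoly_L₄, mul_assoc (X * (X - C 4)), X_sub_C_add_mul_X_sub_C_sub, sq_sqrt hD₀, hD]
    congr 3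
    ring
  refine ⟨hD₀, hfactor, ?_⟩
  rw [hfactor, ← roots_multiset_prod_X_sub_C {0, 4, 2 + α + β + √D, 2 + α + β - √D}]
  simp [mul_assoc]
end

section
/- Let L₄'' = L₄(3,4), i.e. the 4×4 matrix with rows (5,−1,−1,−3), (−1,6,−1,−4), (−1,−1,3,−1), (−3,−4,−1,8). Then the eigenvalues of L₄'', with multiplicity, are exactly 0, 4, 9−√7, and 9+√7; and since 4 < 9−√7, the second-smallest eigenvalue (algebraic connectivity) of L₄'' is 4, with eigenvector (1,1,−3,1)ᵀ. -/
open Matrix Polynomial Real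

/-- The nondecreasing list of eigenvalues (roots of the characteristic polynomial,
with multiplicity) of a real matrix. -/
noncomputable def sortedEigenvalues {m : ℕ} (A : Matrix (Fin m) (Fin m) ℝ) : List ℝ :=
  A.charpoly.roots.sort (· ≤ ·)

/-! Expanding the determinant gives
`χ(X) = X (X - 4) (X² - 18 X + 74)`, and the quadratic factor has the roots `9 ± √7`.
Since `√7 < 5`, the roots in increasing order are `0, 4, 9 - √7, 9 + √7`. -/

lemma sqrt_seven_lt_five : √7 < 5 := by
  rw [Real.sqrt_lt' (by norm_num)]
  norm_num

lemma sortedEigenvalues_eq_of_charpoly_roots {m : ℕ} {A : Matrix (Fin m) (Fin m) ℝ}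
    {l : List ℝ} (hl : l.Pairwise (· ≤ ·)) (h : A.charpoly.roots = l) :
    sortedEigenvalues A = l := by
  rw [sortedEigenvalues, h, Multiset.coe_sort, List.mergeSort_eq_self _ hl]

lemma L₄_three_four :
    L₄ 3 4 = !![5, -1, -1, -3; -1, 6, -1, -4; -1, -1, 3, -1; -3, -4, -1, 8] := by
  norm_num [L₄]

lemma L₄_three_four_mulVec :
    L₄ 3 4 *ᵥ ![1, 1, -3, 1] = (4 : ℝ) • ![1, 1, -3, 1] := by
  rw [L₄_three_four]
  ext i
  fin_cases i <;> simp [mulVec, dotProduct, Fin.sum_univ_four] <;> norm_num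

lemma charpoly_L₄_three_four :
    (L₄ 3 4).charpoly = X * (X - 4) * (X ^ 2 - 18 * X + 74) := by
  have hcharmatrix : charmatrix (L₄ 3 4) =
      !![X - 5, 1, 1, 3; 1, X - 6, 1, 4; 1, 1, X - 3, 1; 3, 4, 1, X - 8] := by
    ext i j
    fin_cases i <;> fin_cases j <;>
      norm_num [charmatrix_apply, L₄, map_ofNat, diagonal_apply, Fin.ext_iff]
  rw [Matrix.charpoly, hcharmatrix, det_succ_row_zero]
  simp [Fin.sum_univ_succ, det_fin_three, Fin.succAbove]
  ring

lemma quadratic_eq_mul_sqrt_seven :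
    (X ^ 2 - 18 * X + 74 : ℝ[X]) = (X - C (9 - √7)) * (X - C (9 + √7)) := by
  have h7 : C √7 * C √7 = (7 : ℝ[X]) := by
    rw [← C_mul, Real.mul_self_sqrt (by norm_num), map_ofNat]
  simp only [map_sub, map_add, map_ofNat]
  linear_combination h7

lemma roots_charpoly_L₄_three_four :
    (L₄ 3 4).charpoly.roots = ({0, 4, 9 - √7, 9 + √7} : Multiset ℝ) := by
  rw [← roots_multiset_prod_X_sub_C ({0, 4, 9 - √7, 9 + √7} : Multiset ℝ),
    charpoly_L₄_three_four, quadratic_eq_mul_sqrt_seven]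
  simp only [Multiset.insert_eq_cons, Multiset.map_cons, Multiset.map_singleton,
    Multiset.prod_cons, Multiset.prod_singleton, map_zero, sub_zero, map_ofNat, mul_assoc]

theorem stmt_14 :
    L₄ 3 4 = !![5, -1, -1, -3; -1, 6, -1, -4; -1, -1, 3, -1; -3, -4, -1, 8] ∧
    (L₄ 3 4).charpoly.roots =
      ({0, 4, 9 - Real.sqrt 7, 9 + Real.sqrt 7} : Multiset ℝ) ∧
    (4 : ℝ) < 9 - Real.sqrt 7 ∧
    (sortedEigenvalues (L₄ 3 4))[1]! = 4 ∧
    (L₄ 3 4) *ᵥ ![1, 1, -3, 1] = (4 : ℝ) • ![1, 1, -3, 1] := by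
  have hsqrt := sqrt_seven_lt_five
  have hsorted : sortedEigenvalues (L₄ 3 4) = [0, 4, 9 - √7, 9 + √7] := by
    refine sortedEigenvalues_eq_of_charpoly_roots ?_ roots_charpoly_L₄_three_four
    refine List.isChain_iff_pairwise.mp ?_
    simp only [List.isChain_cons_cons, List.isChain_singleton, and_true]
    have := Real.sqrt_nonneg 7
    exact ⟨by norm_num, by linarith, by linarith⟩
  exact ⟨L₄_three_four, roots_charpoly_L₄_three_four, by linarith, by rw [hsorted]; rfl,
    L₄_three_four_mulVec⟩
end
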